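/- Let d ≥ 2 be an integer, let V : ℝⁿ → ℝ be of class C¹, and let u : (0,∞) → ℝⁿ be a radial profile for V such that u(r) → u₀ ∈ ℝⁿ and u'(r) → 0 as r → 0⁺; extend u continuously to [0,∞) by setting u(0) = u₀. If ∇V(u₀) ≠ 0, then there exists r_once > 0 such that: (1) u'(r) ≠ 0 for every r in (0, r_once); and (2) for every r* in [0, r_once) and every r in [0,∞), u(r) = u(r*) implies r = r*. -/

import Mathlib

/-!
Writing κ = d - 1, the equation says (r^κ u')' = r^κ ∇V(u), and since r^κ u' → 0 this gives
u'(r) = r/(κ+1) ∇V(u₀) + o(r). Hence ⟪u, ∇V(u₀)⟫ is strictly increasing on some [0, ρ], so the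
extended profile is injective there. The energy V(u) - ‖u'‖²/2 has derivative (κ/r)‖u'‖² ≥ 0;
on (0, ρ] this derivative is at least a multiple of r, so for r ≥ ρ one gets
V(u(r)) ≥ V(u₀) + C ρ², whereas V(u(s)) ≤ V(u₀) + K s². Small s thus have values that are never
taken again beyond ρ.
-/

open Set Filter Topology Function
open scoped RealInnerProductSpace

theorem norm_sub_le_mul_of_hasDerivAt_of_tendsto_nhdsGT {E : Type*} [NormedAddCommGroup E]
    [NormedSpace ℝ E] {f f' : ℝ → E} {a b B : ℝ} {y : E} (hab : a < b)
    (hf : ∀ t ∈ Ioc a b, HasDerivAt f (f' t) t) (hf' : ∀ t ∈ Ioc a b, ‖f' t‖ ≤ B)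
    (hlim : Tendsto f (𝓝[>] a) (𝓝 y)) : ‖f b - y‖ ≤ B * (b - a) := by
  have hbound : ∀ t ∈ Ioo a b, ‖f b - f t‖ ≤ B * (b - t) := fun t ht => by
    simpa [abs_of_pos (sub_pos.2 ht.2)] using
      (convex_Icc t b).norm_image_sub_le_of_norm_hasDerivWithin_le
        (fun x hx => (hf x ⟨ht.1.trans_le hx.1, hx.2⟩).hasDerivWithinAt)
        (fun x hx => hf' x ⟨ht.1.trans_le hx.1, hx.2⟩)
        (left_mem_Icc.2 ht.2.le) (right_mem_Icc.2 ht.2.le)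
  refine le_of_tendsto_of_tendsto ((tendsto_const_nhds.sub hlim).norm)
    ((tendsto_const_nhds.mul (tendsto_const_nhds.sub tendsto_id)).mono_left
      nhdsWithin_le_nhds) ?_
  filter_upwards [Ioo_mem_nhdsGT hab] with t ht using hbound t ht

theorem MonotoneOn.le_of_tendsto_nhdsGT {f : ℝ → ℝ} {a b y : ℝ}
    (hf : MonotoneOn f (Ioc a b)) (hab : a < b) (hlim : Tendsto f (𝓝[>] a) (𝓝 y)) : y ≤ f b := by
  refine le_of_tendsto hlim ?_
  filter_upwards [Ioc_mem_nhdsGT hab] with t ht using hf ht (right_mem_Ioc.2 hab) ht.2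

theorem add_mul_sq_div_two_le_of_hasDerivAt {φ φ' : ℝ → ℝ} {s K y : ℝ} (hs : 0 < s)
    (hφ : ∀ t ∈ Ioc 0 s, HasDerivAt φ (φ' t) t) (hφ' : ∀ t ∈ Ioc 0 s, K * t ≤ φ' t)
    (hlim : Tendsto φ (𝓝[>] 0) (𝓝 y)) : y + K * s ^ 2 / 2 ≤ φ s := by
  have hderiv : ∀ t ∈ Ioc 0 s, HasDerivAt (fun t => φ t - K * t ^ 2 / 2) (φ' t - K * t) t :=
    fun t ht => by
      refine ((hφ t ht).sub (((hasDerivAt_pow 2 t).const_mul K).div_const 2)).congr_deriv ?_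
      push_cast
      ring
  have hmono : MonotoneOn (fun t => φ t - K * t ^ 2 / 2) (Ioc 0 s) :=
    monotoneOn_of_hasDerivWithinAt_nonneg (convex_Ioc 0 s)
      (fun t ht => (hderiv t ht).continuousAt.continuousWithinAt)
      (fun t ht => (hderiv t (interior_subset ht)).hasDerivWithinAt)
      (fun t ht => sub_nonneg.2 (hφ' t (interior_subset ht)))
  have hlim' : Tendsto (fun t => φ t - K * t ^ 2 / 2) (𝓝[>] 0) (𝓝 (y - K * 0 ^ 2 / 2)) :=
    hlim.sub ((Continuous.tendsto (by fun_prop) 0).mono_left nhdsWithin_le_nhds)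
  have := hmono.le_of_tendsto_nhdsGT hs hlim'
  linarith

theorem strictMonoOn_update_of_hasDerivAt_pos {f f' : ℝ → ℝ} {a b y : ℝ}
    (hf : ∀ t ∈ Ioc a b, HasDerivAt f (f' t) t) (hf' : ∀ t ∈ Ioc a b, 0 < f' t)
    (hlim : Tendsto f (𝓝[>] a) (𝓝 y)) : StrictMonoOn (update f a y) (Icc a b) := by
  have hmono : StrictMonoOn f (Ioc a b) :=
    strictMonoOn_of_hasDerivWithinAt_pos (convex_Ioc a b)
      (fun t ht => (hf t ht).continuousAt.continuousWithinAt)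
      (fun t ht => (hf t (interior_subset ht)).hasDerivWithinAt)
      (fun t ht => hf' t (interior_subset ht))
  intro s hs t ht hst
  have hat : a < t := hs.1.trans_lt hst
  rw [update_of_ne hat.ne']
  rcases hs.1.eq_or_lt with rfl | has
  · rw [update_self]
    have hmid : (a + t) / 2 ∈ Ioc a t := ⟨by linarith, by linarith⟩
    calc y ≤ f ((a + t) / 2) :=
          (hmono.monotoneOn.mono (Ioc_subset_Ioc_right (hmid.2.trans ht.2))).le_of_tendsto_nhdsGT
            hmid.1 hlim
      _ < f t := hmono ⟨hmid.1, hmid.2.trans ht.2⟩ ⟨hat, ht.2⟩ (by linarith)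
  · rw [update_of_ne has.ne']
    exact hmono ⟨has, hs.2⟩ ⟨hat, ht.2⟩ hst

theorem ContDiff.continuous_gradient {E : Type*} [NormedAddCommGroup E]
    [InnerProductSpace ℝ E] [CompleteSpace E] {V : E → ℝ} (hV : ContDiff ℝ 1 V) :
    Continuous (gradient V) :=
  (InnerProductSpace.toDual ℝ E).symm.continuous.comp (hV.continuous_fderiv one_ne_zero)

theorem HasGradientAt.comp_hasDerivAt {E : Type*} [NormedAddCommGroup E]
    [InnerProductSpace ℝ E] [CompleteSpace E] {f : E → ℝ} {f' : E} {γ : ℝ → E} {γ' : E} {x : ℝ}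
    (hf : HasGradientAt f f' (γ x)) (hγ : HasDerivAt γ γ' x) :
    HasDerivAt (fun t => f (γ t)) ⟪f', γ'⟫ x := by
  have := hf.hasFDerivAt.comp_hasDerivAt x hγ
  simp only [InnerProductSpace.toDual_apply_apply] at this
  exact this

section RadialProfile

variable {E : Type*} [NormedAddCommGroup E] [InnerProductSpace ℝ E] {u u' F : ℝ → E} {κ : ℝ}

theorem hasDerivAt_rpow_smul_of_radial
    (hu' : ∀ r, 0 < r → HasDerivAt u' (-(κ / r) • u' r + F r) r) {r : ℝ} (hr : 0 < r) :
    HasDerivAt (fun t => t ^ κ • u' t) (r ^ κ • F r) r := by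
  refine ((Real.hasDerivAt_rpow_const (Or.inl hr.ne')).smul (hu' r hr)).congr_deriv ?_
  rw [Real.rpow_sub_one hr.ne', smul_add, smul_smul, add_right_comm, ← add_smul,
    show r ^ κ * -(κ / r) + κ * (r ^ κ / r) = 0 by ring, zero_smul, zero_add]

theorem norm_deriv_sub_smul_le_of_radial (hκ : 0 ≤ κ)
    (hu' : ∀ r, 0 < r → HasDerivAt u' (-(κ / r) • u' r + F r) r)
    (hu'0 : Tendsto u' (𝓝[>] 0) (𝓝 0)) {g : E} {ε s : ℝ} (hs : 0 < s)
    (hF : ∀ t ∈ Ioc 0 s, ‖F t - g‖ ≤ ε) : ‖u' s - (s / (κ + 1)) • g‖ ≤ ε * s := by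
  have hκ1 : κ + 1 ≠ 0 := by positivity
  set h : ℝ → E := fun t => t ^ κ • u' t - (t ^ (κ + 1) / (κ + 1)) • g
  have hderiv : ∀ t ∈ Ioc (0 : ℝ) s, HasDerivAt h (t ^ κ • (F t - g)) t := fun t ht => by
    have hpow := ((Real.hasDerivAt_rpow_const (p := κ + 1) (Or.inl ht.1.ne')).div_const
      (κ + 1)).smul_const g
    refine ((hasDerivAt_rpow_smul_of_radial hu' ht.1).sub hpow).congr_deriv ?_
    rw [add_sub_cancel_right, mul_div_cancel_left₀ _ hκ1, smul_sub]
  have hbound : ∀ t ∈ Ioc (0 : ℝ) s, ‖t ^ κ • (F t - g)‖ ≤ s ^ κ * ε := fun t ht => by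
    rw [norm_smul, Real.norm_of_nonneg (Real.rpow_nonneg ht.1.le κ)]
    exact mul_le_mul (Real.rpow_le_rpow ht.1.le ht.2 hκ) (hF t ht) (norm_nonneg _)
      (by positivity)
  have hlim : Tendsto h (𝓝[>] 0) (𝓝 0) := by
    have h1 : Tendsto (fun t : ℝ => t ^ κ • u' t) (𝓝[>] 0) (𝓝 ((0 : ℝ) ^ κ • 0)) :=
      ((Real.continuous_rpow_const hκ).tendsto 0 |>.mono_left nhdsWithin_le_nhds).smul hu'0
    have h2 : Tendsto (fun t : ℝ => (t ^ (κ + 1) / (κ + 1)) • g) (𝓝[>] 0)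
        (𝓝 (((0 : ℝ) ^ (κ + 1) / (κ + 1)) • g)) :=
      ((((Real.continuous_rpow_const (by linarith)).tendsto 0).div_const _).smul_const
        g).mono_left nhdsWithin_le_nhds
    simpa [Real.zero_rpow hκ1] using h1.sub h2
  have hh := norm_sub_le_mul_of_hasDerivAt_of_tendsto_nhdsGT hs hderiv hbound hlim
  have hhs : h s = s ^ κ • (u' s - (s / (κ + 1)) • g) := by
    simp only [h, smul_sub, smul_smul, Real.rpow_add_one hs.ne', mul_div_assoc]
  rw [sub_zero, sub_zero, hhs, norm_smul, Real.norm_of_nonneg (by positivity), mul_assoc] at hh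
  exact le_of_mul_le_mul_left hh (by positivity)

theorem injOn_update_of_inner_deriv_pos {u₀ w : E} {ρ : ℝ}
    (hu : ∀ t ∈ Ioc 0 ρ, HasDerivAt u (u' t) t) (hu0 : Tendsto u (𝓝[>] 0) (𝓝 u₀))
    (hpos : ∀ t ∈ Ioc 0 ρ, 0 < ⟪u' t, w⟫) : InjOn (update u 0 u₀) (Icc 0 ρ) := by
  have hmono := strictMonoOn_update_of_hasDerivAt_pos (f := fun t => ⟪u t, w⟫)
    (fun t ht => by simpa using (hu t ht).inner ℝ (hasDerivAt_const t w)) hpos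
    (hu0.inner tendsto_const_nhds)
  refine InjOn.of_comp (g := fun x => ⟪x, w⟫) ?_
  rw [comp_update]
  exact hmono.injOn

theorem exists_radius_deriv_bounds_of_radial (hκ : 0 ≤ κ)
    (hu' : ∀ r, 0 < r → HasDerivAt u' (-(κ / r) • u' r + F r) r)
    (hu'0 : Tendsto u' (𝓝[>] 0) (𝓝 0)) {g : E} (hF : Tendsto F (𝓝[>] 0) (𝓝 g))
    (hg : g ≠ 0) :
    ∃ ρ > 0, ∃ c > 0, ∃ K, ∀ t ∈ Ioc 0 ρ,
      0 < ⟪u' t, g⟫ ∧ c * t ≤ ‖u' t‖ ∧ ⟪F t, u' t⟫ ≤ K * t := by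
  have hg0 := norm_pos_iff.2 hg
  -- `2 * c * t` is the size of the leading term `(t / (κ + 1)) • g`; errors below `c * t` keep
  -- `u' t` within half of it.
  obtain ⟨c, hc, hcg⟩ : ∃ c > 0, ‖g‖ = 2 * (κ + 1) * c :=
    ⟨‖g‖ / (2 * (κ + 1)), by positivity, by field_simp⟩
  obtain ⟨ρ, hρ, hρF⟩ := (mem_nhdsGT_iff_exists_Ioc_subset.1
    (hF.eventually (Metric.closedBall_mem_nhds g hc)))
  refine ⟨ρ, hρ, c, hc, (‖g‖ + c) * (3 * c), fun t ht => ?_⟩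
  have hFt : ‖F t - g‖ ≤ c := mem_closedBall_iff_norm.1 (hρF ht)
  have hu't := norm_deriv_sub_smul_le_of_radial hκ hu' hu'0 ht.1
    (fun s hs => mem_closedBall_iff_norm.1 (hρF ⟨hs.1, hs.2.trans ht.2⟩))
  have hlead : ‖(t / (κ + 1)) • g‖ = 2 * c * t := by
    rw [norm_smul, Real.norm_of_nonneg (by have := ht.1; positivity), hcg]
    field_simp
  have hinner : ⟪u' t, g⟫ = 2 * c * t * ‖g‖ + ⟪u' t - (t / (κ + 1)) • g, g⟫ := by
    rw [inner_sub_left, real_inner_smul_left, real_inner_self_eq_norm_sq, sq, hcg]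
    field_simp
    ring
  have hFt' : ‖F t‖ ≤ ‖g‖ + c := by linarith [norm_le_norm_add_norm_sub' (F t) g]
  have hu'le : ‖u' t‖ ≤ 3 * c * t := by
    linarith [norm_le_norm_add_norm_sub' (u' t) ((t / (κ + 1)) • g)]
  refine ⟨?_, ?_, ?_⟩
  · have := abs_le.1 ((abs_real_inner_le_norm _ g).trans
      (mul_le_mul_of_nonneg_right hu't (norm_nonneg g)))
    nlinarith [mul_pos (mul_pos hc ht.1) hg0]
  · linarith [norm_sub_norm_le ((t / (κ + 1)) • g) (u' t),
      norm_sub_rev (u' t) ((t / (κ + 1)) • g)]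
  · calc ⟪F t, u' t⟫ ≤ ‖F t‖ * ‖u' t‖ := real_inner_le_norm _ _
      _ ≤ (‖g‖ + c) * (3 * c * t) := by gcongr
      _ = _ := by ring

section GradientSystem

variable [CompleteSpace E] {V : E → ℝ}

theorem hasDerivAt_energy_of_radial (hV : Differentiable ℝ V)
    (hu : ∀ r, 0 < r → HasDerivAt u (u' r) r)
    (hu' : ∀ r, 0 < r → HasDerivAt u' (-(κ / r) • u' r + gradient V (u r)) r) {r : ℝ}
    (hr : 0 < r) :
    HasDerivAt (fun t => V (u t) - ‖u' t‖ ^ 2 / 2) (κ / r * ‖u' r‖ ^ 2) r := by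
  refine (((hV _).hasGradientAt.comp_hasDerivAt (hu r hr)).sub
    ((hu' r hr).norm_sq.div_const 2)).congr_deriv ?_
  rw [inner_add_right, real_inner_smul_right, real_inner_self_eq_norm_sq, real_inner_comm]
  ring

theorem add_mul_sq_div_two_le_potential_of_radial (hκ : 0 ≤ κ) (hV : Differentiable ℝ V)
    (hu : ∀ r, 0 < r → HasDerivAt u (u' r) r)
    (hu' : ∀ r, 0 < r → HasDerivAt u' (-(κ / r) • u' r + gradient V (u r)) r) {y : ℝ}
    (hVu0 : Tendsto (fun t => V (u t)) (𝓝[>] 0) (𝓝 y)) (hu'0 : Tendsto u' (𝓝[>] 0) (𝓝 0))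
    {ρ c : ℝ} (hρ : 0 < ρ) (hc : 0 ≤ c) (hlow : ∀ t ∈ Ioc 0 ρ, c * t ≤ ‖u' t‖) {r : ℝ}
    (hr : ρ ≤ r) : y + κ * c ^ 2 * ρ ^ 2 / 2 ≤ V (u r) := by
  set N : ℝ → ℝ := fun t => V (u t) - ‖u' t‖ ^ 2 / 2
  have hN : ∀ t, 0 < t → HasDerivAt N (κ / t * ‖u' t‖ ^ 2) t :=
    fun t ht => hasDerivAt_energy_of_radial hV hu hu' ht
  have hNlim : Tendsto N (𝓝[>] 0) (𝓝 y) := by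
    simpa using hVu0.sub ((hu'0.norm.pow 2).div_const 2)
  have hNρ : y + κ * c ^ 2 * ρ ^ 2 / 2 ≤ N ρ := by
    refine add_mul_sq_div_two_le_of_hasDerivAt hρ (fun t ht => hN t ht.1) (fun t ht => ?_)
      hNlim
    have hsq : (c * t) ^ 2 ≤ ‖u' t‖ ^ 2 :=
      pow_le_pow_left₀ (mul_nonneg hc ht.1.le) (hlow t ht) 2
    calc κ * c ^ 2 * t = κ / t * (c * t) ^ 2 := by field_simp [ht.1.ne']
      _ ≤ κ / t * ‖u' t‖ ^ 2 := by gcongr; exact div_nonneg hκ ht.1.le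
  have hNmono : MonotoneOn N (Ici ρ) := by
    refine monotoneOn_of_hasDerivWithinAt_nonneg (f' := fun t => κ / t * ‖u' t‖ ^ 2)
      (convex_Ici ρ)
      (fun t ht => (hN t (hρ.trans_le ht)).continuousAt.continuousWithinAt) (fun t ht => ?_)
      (fun t ht => ?_)
    · rw [interior_Ici] at ht ⊢
      exact (hN t (hρ.trans ht)).hasDerivWithinAt
    · rw [interior_Ici] at ht
      exact mul_nonneg (div_nonneg hκ (hρ.trans ht).le) (sq_nonneg _)
  calc y + κ * c ^ 2 * ρ ^ 2 / 2 ≤ N ρ := hNρ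
    _ ≤ N r := hNmono self_mem_Ici hr hr
    _ ≤ V (u r) := by simp only [N]; linarith [sq_nonneg ‖u' r‖]

theorem potential_update_lt_of_radial (hκ : 0 ≤ κ) (hV : Differentiable ℝ V)
    (hu : ∀ r, 0 < r → HasDerivAt u (u' r) r)
    (hu' : ∀ r, 0 < r → HasDerivAt u' (-(κ / r) • u' r + gradient V (u r)) r) {u₀ : E}
    (hVu0 : Tendsto (fun t => V (u t)) (𝓝[>] 0) (𝓝 (V u₀)))
    (hu'0 : Tendsto u' (𝓝[>] 0) (𝓝 0)) {ρ c K : ℝ} (hρ : 0 < ρ) (hc : 0 ≤ c)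
    (hlow : ∀ t ∈ Ioc 0 ρ, c * t ≤ ‖u' t‖)
    (hK : ∀ t ∈ Ioc 0 ρ, ⟪gradient V (u t), u' t⟫ ≤ K * t) {s r : ℝ} (hs : s ∈ Icc 0 ρ)
    (hsK : K * s ^ 2 < κ * c ^ 2 * ρ ^ 2) (hr : ρ ≤ r) : V (update u 0 u₀ s) < V (u r) := by
  have hlower :=
    add_mul_sq_div_two_le_potential_of_radial hκ hV hu hu' hVu0 hu'0 hρ hc hlow hr
  have hupper : V (update u 0 u₀ s) ≤ V u₀ + K * s ^ 2 / 2 := by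
    rcases hs.1.eq_or_lt with rfl | hs0
    · simp
    rw [update_of_ne hs0.ne']
    have := add_mul_sq_div_two_le_of_hasDerivAt (φ := fun t => -V (u t)) (K := -K) hs0
      (fun t ht => ((hV _).hasGradientAt.comp_hasDerivAt (hu t ht.1)).neg)
      (fun t ht => by linarith [hK t ⟨ht.1, ht.2.trans hs.2⟩]) hVu0.neg
    linarith
  linarith

end GradientSystem

end RadialProfile

theorem radial_profile_values_reached_once_near_origin_general
    {n : ℕ} {d : ℕ} (hd : 2 ≤ d)
    (V : EuclideanSpace ℝ (Fin n) → ℝ) (hV : ContDiff ℝ 1 V)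
    (u u' : ℝ → EuclideanSpace ℝ (Fin n))
    (hu : ∀ r, 0 < r → HasDerivAt u (u' r) r)
    (hu' : ∀ r, 0 < r → HasDerivAt u'
      (-(((d : ℝ) - 1) / r) • u' r + gradient V (u r)) r)
    (u₀ : EuclideanSpace ℝ (Fin n))
    (hu0 : Tendsto u (nhdsWithin 0 (Ioi 0)) (nhds u₀))
    (hu'0 : Tendsto u' (nhdsWithin 0 (Ioi 0)) (nhds 0))
    (hnoncrit : gradient V u₀ ≠ 0) :
    ∃ ronce > (0 : ℝ),
      (∀ r, 0 < r → r < ronce → u' r ≠ 0) ∧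
      (∀ rstar ∈ Ico (0 : ℝ) ronce, ∀ r ∈ Ici (0 : ℝ),
        (if r = 0 then u₀ else u r) = (if rstar = 0 then u₀ else u rstar) →
        r = rstar) := by
  have hκ : (0 : ℝ) < d - 1 := by
    have : (2 : ℝ) ≤ d := by exact_mod_cast hd
    linarith
  obtain ⟨ρ, hρ, c, hc, K, hbounds⟩ := exists_radius_deriv_bounds_of_radial hκ.le hu' hu'0
    ((hV.continuous_gradient.tendsto u₀).comp hu0) hnoncrit
  have hsmall : ∀ᶠ s in 𝓝 0, K * s ^ 2 < ((d : ℝ) - 1) * c ^ 2 * ρ ^ 2 :=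
    (Continuous.tendsto (by fun_prop) 0).eventually (gt_mem_nhds (by simp; positivity))
  obtain ⟨δ, hδ, hδK⟩ := Metric.eventually_nhds_iff.1 hsmall
  refine ⟨min δ ρ, lt_min hδ hρ, fun r hr hrδ hr0 => ?_, ?_⟩
  · simpa [hr0] using (hbounds r ⟨hr, hrδ.le.trans (min_le_right _ _)⟩).1
  rintro s ⟨hs0, hsδ⟩ r hr heq
  have hsρ : s ≤ ρ := hsδ.le.trans (min_le_right _ _)
  rw [← update_apply, ← update_apply] at heq
  rcases le_or_gt r ρ with hrρ | hρr
  · exact injOn_update_of_inner_deriv_pos (fun t ht => hu t ht.1) hu0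
      (fun t ht => (hbounds t ht).1) ⟨hr, hrρ⟩ ⟨hs0, hsρ⟩ heq
  · refine absurd (congrArg V heq).symm (ne_of_lt ?_)
    rw [update_of_ne (hρ.trans hρr).ne']
    exact potential_update_lt_of_radial hκ.le (hV.differentiable one_ne_zero) hu hu'
      ((hV.continuous.tendsto u₀).comp hu0) hu'0 hρ hc.le (fun t ht => (hbounds t ht).2.1)
      (fun t ht => (hbounds t ht).2.2) ⟨hs0, hsρ⟩
      (hδK (by simpa [abs_of_nonneg hs0] using hsδ.trans_le (min_le_left _ _))) hρr.le

/-- Let `u` be a radial profile for a `C¹` potential `V` with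
`u(r) → u₀` and `u'(r) → 0` as `r → 0⁺`, and extend `u` to `[0,∞)` by the
value `u₀` at `0` (the function `v` below). If `∇V(u₀) ≠ 0`, then there is
`r_once > 0` such that `u'` does not vanish on `(0, r_once)` and every value
taken by the extended profile on `[0, r_once)` is reached only once on
`[0,∞)`. -/
theorem radial_profile_values_reached_once_near_origin
    {n : ℕ} (hn : 1 ≤ n) {d : ℕ} (hd : 2 ≤ d)
    (V : EuclideanSpace ℝ (Fin n) → ℝ) (hV : ContDiff ℝ 1 V)
    (u u' : ℝ → EuclideanSpace ℝ (Fin n))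
    (hu : ∀ r, 0 < r → HasDerivAt u (u' r) r)
    (hu' : ∀ r, 0 < r → HasDerivAt u'
      (-(((d : ℝ) - 1) / r) • u' r + gradient V (u r)) r)
    (u₀ : EuclideanSpace ℝ (Fin n))
    (hu0 : Tendsto u (nhdsWithin 0 (Ioi 0)) (nhds u₀))
    (hu'0 : Tendsto u' (nhdsWithin 0 (Ioi 0)) (nhds 0))
    (hnoncrit : gradient V u₀ ≠ 0) :
    ∃ ronce > (0 : ℝ),
      (∀ r, 0 < r → r < ronce → u' r ≠ 0) ∧
      (∀ rstar ∈ Ico (0 : ℝ) ronce, ∀ r ∈ Ici (0 : ℝ),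
        (if r = 0 then u₀ else u r) = (if rstar = 0 then u₀ else u rstar) →
        r = rstar) :=
  radial_profile_values_reached_once_near_origin_general hd V hV u u' hu hu' u₀ hu0 hu'0 hnoncrit
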